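/- Let μ be a Borel probability measure on the unit circle such that ∫ z² dμ(z) = 1. Then there exists t ∈ [0, 1] with μ = t·δ₁ + (1 − t)·δ₋₁, where δ₁ and δ₋₁ denote the Dirac measures at the points 1 and −1 of the circle; in particular ∫ z dμ(z) = 2t − 1 is a real number lying in the interval [−1, 1]. -/

import Mathlib

/-!
On the circle `‖z ^ 2‖ = 1`, so `∫ z ^ 2 ∂μ = 1` is the equality case of `‖∫ f ∂μ‖ ≤ ∫ ‖f‖ ∂μ`;
by strict convexity of the closed unit disc this forces `z ^ 2 = 1` for `μ`-a.e. `z`.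
Hence `μ` is carried by `{1, -1}`, i.e. it is a convex combination of the two Dirac masses.
-/

open MeasureTheory

noncomputable instance : MeasurableSpace Circle := borel Circle
instance : BorelSpace Circle := ⟨rfl⟩

/-- The point `-1` of the unit circle. -/
noncomputable def negOneCircle : Circle :=
  ⟨-1, by simp [Submonoid.unitSphere, Metric.mem_sphere]⟩

namespace MeasureTheory

variable {α E : Type*} [MeasurableSpace α] {μ : Measure α}
  [NormedAddCommGroup E] [NormedSpace ℝ E] [CompleteSpace E]

theorem ae_eq_of_integral_eq_of_norm_le [StrictConvexSpace ℝ E] [IsProbabilityMeasure μ]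
    {f : α → E} {c : E} (h_int : ∫ x, f x ∂μ = c) (h_le : ∀ᵐ x ∂μ, ‖f x‖ ≤ ‖c‖) :
    ∀ᵐ x ∂μ, f x = c := by
  have := ae_eq_const_or_norm_average_lt_of_norm_le_const h_le
  rw [average_eq_integral, h_int] at this
  exact this.resolve_right (lt_irrefl _)

theorem Measure.eq_smul_dirac_add_smul_dirac_of_ae_eq_or_eq [MeasurableSingletonClass α]
    {a b : α} (hab : a ≠ b) (h : ∀ᵐ x ∂μ, x = a ∨ x = b) :
    μ = μ {a} • Measure.dirac a + μ {b} • Measure.dirac b := by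
  have h_pair : μ.restrict ({a} ∪ {b}) = μ := Measure.restrict_eq_self_of_ae_mem h
  conv_lhs => rw [← h_pair]
  rw [Measure.restrict_union (Set.disjoint_singleton.mpr hab)
    (measurableSet_singleton b), Measure.restrict_singleton, Measure.restrict_singleton]

theorem Measure.exists_eq_ofReal_smul_dirac_add_ofReal_smul_dirac [MeasurableSingletonClass α]
    [IsProbabilityMeasure μ] {a b : α} (hab : a ≠ b) (h : ∀ᵐ x ∂μ, x = a ∨ x = b) :
    ∃ t ∈ Set.Icc (0 : ℝ) 1,
      μ = ENNReal.ofReal t • Measure.dirac a + ENNReal.ofReal (1 - t) • Measure.dirac b := by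
  have hμ := Measure.eq_smul_dirac_add_smul_dirac_of_ae_eq_or_eq hab h
  have h_sum : μ {a} + μ {b} = 1 := by
    simpa [measure_univ] using (congrArg (· Set.univ) hμ).symm
  refine ⟨μ.real {a}, ⟨measureReal_nonneg, measureReal_le_one⟩, ?_⟩
  rwa [ENNReal.ofReal_sub _ measureReal_nonneg, ofReal_measureReal, ENNReal.ofReal_one,
    ← h_sum, ENNReal.add_sub_cancel_left (measure_ne_top μ _)]

theorem integral_ofReal_smul_dirac_add_ofReal_smul_dirac [MeasurableSingletonClass α]
    (f : α → E) (a b : α) {t : ℝ} (ht : t ∈ Set.Icc (0 : ℝ) 1) :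
    ∫ x, f x ∂(ENNReal.ofReal t • Measure.dirac a + ENNReal.ofReal (1 - t) • Measure.dirac b) =
      t • f a + (1 - t) • f b := by
  rw [integral_add_measure ((integrable_dirac enorm_lt_top).smul_measure ENNReal.ofReal_ne_top)
      ((integrable_dirac enorm_lt_top).smul_measure ENNReal.ofReal_ne_top),
    integral_smul_measure, integral_smul_measure, integral_dirac, integral_dirac,
    ENNReal.toReal_ofReal ht.1, ENNReal.toReal_ofReal (sub_nonneg.mpr ht.2)]

end MeasureTheory

@[simp]
theorem coe_negOneCircle : (negOneCircle : ℂ) = -1 := rfl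

theorem one_ne_negOneCircle : (1 : Circle) ≠ negOneCircle := by
  rw [ne_eq, ← Circle.coe_inj]
  norm_num

theorem eq_one_or_eq_negOneCircle_of_sq_eq_one {z : Circle} (hz : (z : ℂ) ^ 2 = 1) :
    z = 1 ∨ z = negOneCircle := by
  simpa [← Circle.coe_inj] using hz

theorem measure_with_second_moment_one {μ : Measure Circle} [IsProbabilityMeasure μ]
    (h : ∫ z, (z : ℂ) ^ 2 ∂μ = 1) :
    ∃ t ∈ Set.Icc (0 : ℝ) 1,
      μ = ENNReal.ofReal t • Measure.dirac (1 : Circle) +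
          ENNReal.ofReal (1 - t) • Measure.dirac negOneCircle ∧
      ∫ z, (z : ℂ) ∂μ = 2 * t - 1 := by
  have h_sq : ∀ᵐ (z : Circle) ∂μ, (z : ℂ) ^ 2 = 1 :=
    ae_eq_of_integral_eq_of_norm_le h (.of_forall fun z => by simp [Circle.norm_coe])
  obtain ⟨t, ht, hμ⟩ := Measure.exists_eq_ofReal_smul_dirac_add_ofReal_smul_dirac
    one_ne_negOneCircle (h_sq.mono fun _ => eq_one_or_eq_negOneCircle_of_sq_eq_one)
  refine ⟨t, ht, hμ, ?_⟩
  rw [hμ, integral_ofReal_smul_dirac_add_ofReal_smul_dirac _ _ _ ht]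
  simp only [Circle.coe_one, coe_negOneCircle, Complex.real_smul]
  push_cast
  ring
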